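/- arXiv:1705.09372 — 2 statements merged into one kernel-verified Lean document; each statement's English description precedes it below -/
import Mathlib

section
/- Fix an integer m ≥ 1 and ε ∈ (0,1). Let X^n be uniformly distributed on {0,1}^n and let Y_(1)^n, …, Y_(m)^n be obtained from X^n by passing it through m independent binary erasure channels with erasure probability ε. Let Y' = (Y_(1)^n, …, Y_(m)^n) and, for each realization of Y', let G(·|Y') be a guessing function for the conditional distribution of X^n given Y'. Then lim_{n→∞} (1/n) log₂ E[G(X^n|Y')] = log₂(1 + ε^m). -/
open Real Filter Finset

/-- Binary Rényi entropy of order `β` (base-2 logarithm). -/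
noncomputable def Hb (β p : ℝ) : ℝ := (1 / (1 - β)) * Real.logb 2 (p ^ β + (1 - p) ^ β)

/-- Binary KL divergence `D(p‖q)` in bits (Lean's `logb 2 0 = 0` gives the `0·log 0 = 0` convention). -/
noncomputable def Dkl (p q : ℝ) : ℝ :=
  p * Real.logb 2 (p / q) + (1 - p) * Real.logb 2 ((1 - p) / (1 - q))

/-- Binary Shannon entropy in bits. -/
noncomputable def binEnt (p : ℝ) : ℝ := -(p * Real.logb 2 p) - (1 - p) * Real.logb 2 (1 - p)

/-- `G` is a guessing function for the distribution `q` on the finite set `S`: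
a bijection onto `{1, …, |S|}` ranking more likely elements first. -/
def IsGuessingFunction {S : Type*} [Fintype S] (q : S → ℝ) (G : S → ℕ) : Prop :=
  Function.Injective G ∧ (∀ x, G x ∈ Finset.Icc 1 (Fintype.card S)) ∧
    ∀ x y, q y < q x → G x < G y

/-- Distribution of `n` i.i.d. Bernoulli(`p`) bits (`true` has probability `p`). -/
noncomputable def bernDist (p : ℝ) (n : ℕ) (x : Fin n → Bool) : ℝ :=
  ∏ i, if x i then p else 1 - p

/-- Transition probability of a binary erasure channel with erasure probability `ε`:
`none` is the erasure symbol. -/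
noncomputable def becPr (ε : ℝ) (b : Bool) : Option Bool → ℝ
  | none => ε
  | some b' => if b' = b then 1 - ε else 0

/-- Joint distribution of a uniform `X^n` and the outputs `Y' = (Y₍₁₎,…,Y₍ₘ₎)` of `m`
independent BEC(`ε`) channels applied to `X^n`. -/
noncomputable def becJoint (ε : ℝ) (m n : ℕ) (x : Fin n → Bool)
    (y : Fin m → Fin n → Option Bool) : ℝ :=
  ((1 : ℝ) / 2) ^ n * ∏ j, ∏ i, becPr ε (x i) (y j i)

/-- Conditional distribution of `X^n` given `Y' = y` (junk value `0` off the support of `Y'`). -/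
noncomputable def becCond (ε : ℝ) (m n : ℕ) (y : Fin m → Fin n → Option Bool)
    (x : Fin n → Bool) : ℝ :=
  becJoint ε m n x y / ∑ x', becJoint ε m n x' y

/-- Joint distribution of a uniform `X^n` and the output of a single BEC(`ε`). -/
noncomputable def becJoint1 (ε : ℝ) (n : ℕ) (x : Fin n → Bool) (y : Fin n → Option Bool) : ℝ :=
  ((1 : ℝ) / 2) ^ n * ∏ i, becPr ε (x i) (y i)

/-- Conditional distribution of `X^n` given the output `y` of a single BEC(`ε`). -/
noncomputable def becCond1 (ε : ℝ) (n : ℕ) (y : Fin n → Option Bool) (x : Fin n → Bool) : ℝ :=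
  becJoint1 ε n x y / ∑ x', becJoint1 ε n x' y

/-!
Given the outputs `y`, the posterior of `X^n` is uniform on the set of inputs compatible with the
unerased symbols, which has `2 ^ K` elements, `K` the number of positions erased by all `m`
channels. A guessing function ranks these inputs first, in some order, so the conditional expected
guesswork is `(2 ^ K + 1) / 2`. The positions are independent and each is fully erased with
probability `ε ^ m`, so `E[2 ^ K] = (1 + ε ^ m) ^ n` and the expected guesswork is
`((1 + ε ^ m) ^ n + 1) / 2`, whose normalized logarithm tends to `log₂ (1 + ε ^ m)`.
-/

lemma sum_Icc_one_natCast (K : ℕ) : ∑ k ∈ Icc 1 K, (k : ℝ) = K * (K + 1) / 2 := by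
  induction K with
  | zero => simp
  | succ K ih =>
    rw [sum_Icc_succ_top (by omega), ih]
    push_cast
    ring

namespace IsGuessingFunction

variable {S : Type*} [Fintype S] {q : S → ℝ} {G : S → ℕ} {A : Finset S}

lemma image_univ (hG : IsGuessingFunction q G) : univ.image G = Icc 1 (Fintype.card S) := by
  refine eq_of_subset_of_card_le (fun k hk => ?_) ?_
  · obtain ⟨x, -, rfl⟩ := mem_image.mp hk
    exact hG.2.1 x
  · rw [Nat.card_Icc, card_image_of_injective _ hG.1, card_univ]
    omega

lemma Icc_subset_image (hG : IsGuessingFunction q G) (hA : ∀ x ∈ A, ∀ z ∉ A, q z < q x)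
    {x : S} (hx : x ∈ A) : Icc 1 (G x) ⊆ A.image G := by
  intro k hk
  have hk' : k ∈ univ.image G := by
    rw [hG.image_univ]
    exact Icc_subset_Icc_right (mem_Icc.mp (hG.2.1 x)).2 hk
  obtain ⟨z, -, rfl⟩ := mem_image.mp hk'
  by_contra hz
  have hlt := hG.2.2 x z (hA x hx z fun hzA => hz (mem_image_of_mem G hzA))
  exact absurd (mem_Icc.mp hk).2 (not_le.mpr hlt)

lemma image_eq_Icc_card (hG : IsGuessingFunction q G) (hA : ∀ x ∈ A, ∀ z ∉ A, q z < q x) :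
    A.image G = Icc 1 #A := by
  refine eq_of_subset_of_card_le (fun k hk => ?_) ?_
  · obtain ⟨x, hx, rfl⟩ := mem_image.mp hk
    have hcard := card_le_card (hG.Icc_subset_image hA hx)
    rw [Nat.card_Icc, card_image_of_injective _ hG.1] at hcard
    exact mem_Icc.mpr ⟨(mem_Icc.mp (hG.2.1 x)).1, by omega⟩
  · rw [Nat.card_Icc, card_image_of_injective _ hG.1]
    omega

lemma sum_eq_of_forall_lt (hG : IsGuessingFunction q G) (hA : ∀ x ∈ A, ∀ z ∉ A, q z < q x) :
    ∑ x ∈ A, (G x : ℝ) = #A * (#A + 1) / 2 := by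
  rw [← sum_image (f := fun k : ℕ => (k : ℝ)) fun x _ y _ h => hG.1 h,
    hG.image_eq_Icc_card hA, sum_Icc_one_natCast]

end IsGuessingFunction

lemma sum_prod_swap {α β κ ι : Type*} [Fintype α] [Fintype β] [Fintype κ] [Fintype ι]
    [DecidableEq ι] [DecidableEq κ] (g : α → (κ → β) → ℝ) :
    ∑ y : κ → ι → β, ∑ x : ι → α, ∏ i, g (x i) (Function.swap y i) =
      (∑ a, ∑ c, g a c) ^ Fintype.card ι := by
  rw [sum_comm, ← card_univ, ← prod_const, Fintype.prod_sum fun _ a => ∑ c, g a c]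
  refine sum_congr rfl fun x _ => ?_
  rw [Fintype.prod_sum (fun i c => g (x i) c)]
  exact Equiv.sum_comp (Equiv.piComm fun _ _ => β) (fun z => ∏ i, g (x i) (z i))

noncomputable def erasureWeight (ε : ℝ) : Option Bool → ℝ
  | none => ε
  | some _ => 1 - ε

noncomputable def becColJoint (ε : ℝ) (m : ℕ) (b : Bool) (c : Fin m → Option Bool) : ℝ :=
  1 / 2 * ∏ j, becPr ε b (c j)

noncomputable def becColWeight (ε : ℝ) (m : ℕ) (c : Fin m → Option Bool) : ℝ :=
  1 / 2 * ∏ j, erasureWeight ε (c j)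

def compatibleBits {m : ℕ} (c : Fin m → Option Bool) : Finset Bool :=
  univ.filter fun b => ∀ j, c j = none ∨ c j = some b

/-- The inputs compatible with the outputs `y`; `Function.swap y i` is the column of the `m`
outputs of the `i`-th bit. -/
def becCompatible {m n : ℕ} (y : Fin m → Fin n → Option Bool) : Finset (Fin n → Bool) :=
  Fintype.piFinset fun i => compatibleBits (Function.swap y i)

noncomputable def becWeight (ε : ℝ) (m n : ℕ) (y : Fin m → Fin n → Option Bool) : ℝ :=
  ∏ i, becColWeight ε m (Function.swap y i)

section BEC

variable {ε : ℝ} {m n : ℕ}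

lemma becPr_eq_ite (b : Bool) (o : Option Bool) :
    becPr ε b o = if o = none ∨ o = some b then erasureWeight ε o else 0 := by
  cases o <;> simp [becPr, erasureWeight, eq_comm]

lemma sum_becPr (b : Bool) : ∑ o, becPr ε b o = 1 := by
  simp [Fintype.sum_option, becPr]

lemma becColJoint_eq_ite (b : Bool) (c : Fin m → Option Bool) :
    becColJoint ε m b c = if b ∈ compatibleBits c then becColWeight ε m c else 0 := by
  simp only [becColJoint, becColWeight, becPr_eq_ite, Fintype.prod_ite_zero, compatibleBits,
    mem_filter, mem_univ, true_and]
  split_ifs <;> simp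

lemma card_compatibleBits {b : Bool} {c : Fin m → Option Bool} (hb : b ∈ compatibleBits c) :
    #(compatibleBits c) = if c = (fun _ => none) then 2 else 1 := by
  split_ifs with hc
  · subst hc
    simp [compatibleBits]
  · obtain ⟨j, hj⟩ := Function.ne_iff.mp hc
    have hcj : c j = some b := ((mem_filter.mp hb).2 j).resolve_left hj
    refine card_eq_one.mpr ⟨b, eq_singleton_iff_unique_mem.mpr ⟨hb, fun b' hb' => ?_⟩⟩
    simpa [hcj, eq_comm] using ((mem_filter.mp hb').2 j).resolve_left hj

lemma sum_becColJoint (b : Bool) : ∑ c, becColJoint ε m b c = 1 / 2 := by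
  simp only [becColJoint, ← mul_sum, ← Fintype.prod_sum fun _ o => becPr ε b o, sum_becPr,
    prod_const_one, mul_one]

lemma becColJoint_mul_card (b : Bool) (c : Fin m → Option Bool) :
    becColJoint ε m b c * #(compatibleBits c) =
      becColJoint ε m b c * (1 + if c = (fun _ => none) then 1 else 0) := by
  by_cases hb : b ∈ compatibleBits c
  · rw [card_compatibleBits hb]
    split_ifs <;> norm_num
  · rw [becColJoint_eq_ite, if_neg hb, zero_mul, zero_mul]

lemma sum_becColJoint_mul_card (b : Bool) :
    ∑ c, becColJoint ε m b c * #(compatibleBits c) = (1 + ε ^ m) / 2 := by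
  have hnone : becColJoint ε m b (fun _ => none) = ε ^ m / 2 := by
    simp only [becColJoint, becPr, prod_const, card_univ, Fintype.card_fin]
    ring
  simp only [becColJoint_mul_card, mul_add, mul_one, mul_ite, mul_zero, sum_add_distrib,
    sum_becColJoint, sum_ite_eq', mem_univ, if_true, hnone]
  ring

lemma becJoint_eq_prod (x : Fin n → Bool) (y : Fin m → Fin n → Option Bool) :
    becJoint ε m n x y = ∏ i, becColJoint ε m (x i) (Function.swap y i) := by
  rw [becJoint, Finset.prod_comm]
  simp [becColJoint, prod_mul_distrib]

lemma becJoint_eq_ite (x : Fin n → Bool) (y : Fin m → Fin n → Option Bool) :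
    becJoint ε m n x y = if x ∈ becCompatible y then becWeight ε m n y else 0 := by
  simp only [becJoint_eq_prod, becColJoint_eq_ite, Fintype.prod_ite_zero, becCompatible,
    Fintype.mem_piFinset, becWeight]
  congr

lemma becWeight_pos (hε : ε ∈ Set.Ioo (0 : ℝ) 1) (y : Fin m → Fin n → Option Bool) :
    0 < becWeight ε m n y := by
  refine prod_pos fun i _ => mul_pos one_half_pos (prod_pos fun j _ => ?_)
  cases Function.swap y i j
  · exact hε.1
  · exact sub_pos.mpr hε.2

lemma sum_becJoint (y : Fin m → Fin n → Option Bool) :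
    ∑ x, becJoint ε m n x y = becWeight ε m n y * #(becCompatible y) := by
  simp [becJoint_eq_ite, sum_ite_mem, mul_comm]

lemma becCond_lt (hε : ε ∈ Set.Ioo (0 : ℝ) 1) {y : Fin m → Fin n → Option Bool}
    {x z : Fin n → Bool} (hx : x ∈ becCompatible y) (hz : z ∉ becCompatible y) :
    becCond ε m n y z < becCond ε m n y x := by
  have hw := becWeight_pos hε y
  have hcard : 0 < #(becCompatible y) := card_pos.mpr ⟨x, hx⟩
  rw [becCond, becCond, sum_becJoint, becJoint_eq_ite, becJoint_eq_ite, if_pos hx, if_neg hz,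
    zero_div]
  positivity

lemma sum_becJoint_mul_guess (hε : ε ∈ Set.Ioo (0 : ℝ) 1) {y : Fin m → Fin n → Option Bool}
    {G : (Fin n → Bool) → ℕ} (hG : IsGuessingFunction (becCond ε m n y) G) :
    ∑ x, becJoint ε m n x y * G x =
      ∑ x, becJoint ε m n x y * ((#(becCompatible y) + 1) / 2) := by
  rw [← sum_mul, sum_becJoint]
  simp only [becJoint_eq_ite, ite_mul, zero_mul, sum_ite_mem, univ_inter, ← mul_sum,
    hG.sum_eq_of_forall_lt fun x hx z hz => becCond_lt hε hx hz]
  ring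

lemma sum_sum_becJoint :
    ∑ y : Fin m → Fin n → Option Bool, ∑ x, becJoint ε m n x y = 1 := by
  simp only [becJoint_eq_prod]
  rw [sum_prod_swap, Fintype.sum_bool, sum_becColJoint, sum_becColJoint]
  norm_num

lemma sum_sum_becJoint_mul_card :
    ∑ y : Fin m → Fin n → Option Bool, ∑ x, becJoint ε m n x y * #(becCompatible y) =
      (1 + ε ^ m) ^ n := by
  simp only [becJoint_eq_prod, becCompatible, Fintype.card_piFinset, Nat.cast_prod,
    ← prod_mul_distrib]
  rw [sum_prod_swap (fun b c => becColJoint ε m b c * #(compatibleBits c)), Fintype.sum_bool,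
    sum_becColJoint_mul_card, sum_becColJoint_mul_card, Fintype.card_fin]
  ring

lemma expected_guesswork_eq (hε : ε ∈ Set.Ioo (0 : ℝ) 1)
    {G : (Fin m → Fin n → Option Bool) → (Fin n → Bool) → ℕ}
    (hG : ∀ y, IsGuessingFunction (becCond ε m n y) (G y)) :
    ∑ y : Fin m → Fin n → Option Bool, ∑ x, becJoint ε m n x y * G y x =
      ((1 + ε ^ m) ^ n + 1) / 2 := by
  calc ∑ y : Fin m → Fin n → Option Bool, ∑ x, becJoint ε m n x y * G y x
      = ∑ y : Fin m → Fin n → Option Bool, ∑ x,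
          (becJoint ε m n x y * #(becCompatible y) + becJoint ε m n x y) / 2 := by
        refine sum_congr rfl fun y _ => ?_
        rw [sum_becJoint_mul_guess hε (hG y)]
        exact sum_congr rfl fun x _ => by ring
    _ = ((1 + ε ^ m) ^ n + 1) / 2 := by
        simp only [← sum_div, sum_add_distrib, sum_sum_becJoint_mul_card, sum_sum_becJoint]

end BEC

lemma logb_pow_add_one_div_two_mem_Icc {a : ℝ} (ha : 1 ≤ a) (n : ℕ) :
    logb 2 ((a ^ n + 1) / 2) ∈ Set.Icc (n * logb 2 a - 1) (n * logb 2 a) := by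
  have hpow : 1 ≤ a ^ n := one_le_pow₀ ha
  have hpos : 0 < a ^ n := zero_lt_one.trans_le hpow
  have hhalf : n * logb 2 a - 1 = logb 2 (a ^ n / 2) := by
    rw [logb_div hpos.ne' two_ne_zero, logb_self_eq_one one_lt_two, logb_pow]
  rw [hhalf, ← logb_pow]
  exact ⟨logb_le_logb_of_le one_lt_two (by positivity) (by linarith),
    logb_le_logb_of_le one_lt_two (by positivity) (by linarith)⟩

lemma tendsto_one_div_mul_logb_pow_add_one_div_two {a : ℝ} (ha : 1 ≤ a) :
    Tendsto (fun n : ℕ => (1 / (n : ℝ)) * logb 2 ((a ^ n + 1) / 2)) atTop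
      (nhds (logb 2 a)) := by
  have hlower : Tendsto (fun n : ℕ => logb 2 a - 1 / (n : ℝ)) atTop (nhds (logb 2 a)) := by
    simpa using (tendsto_const_nhds (x := logb 2 a)).sub tendsto_one_div_atTop_nhds_zero_nat
  refine tendsto_of_tendsto_of_tendsto_of_le_of_le' hlower tendsto_const_nhds ?_ ?_ <;>
    filter_upwards [eventually_gt_atTop 0] with n hn <;>
    have hn' : (0 : ℝ) < n := Nat.cast_pos.mpr hn
  · calc logb 2 a - 1 / n = 1 / n * (n * logb 2 a - 1) := by field_simp
      _ ≤ _ := mul_le_mul_of_nonneg_left (logb_pow_add_one_div_two_mem_Icc ha n).1 (by positivity)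
  · calc _ ≤ 1 / (n : ℝ) * (n * logb 2 a) :=
          mul_le_mul_of_nonneg_left (logb_pow_add_one_div_two_mem_Icc ha n).2 (by positivity)
      _ = logb 2 a := by field_simp

theorem centralized_bec_expected_guesswork_exponent_general
    (m : ℕ) (ε : ℝ) (hε : ε ∈ Set.Ioo (0 : ℝ) 1)
    (G : ∀ n, (Fin m → Fin n → Option Bool) → (Fin n → Bool) → ℕ)
    (hG : ∀ n y, IsGuessingFunction (becCond ε m n y) (G n y)) :
    Tendsto
      (fun n : ℕ => (1 / (n : ℝ)) *
        Real.logb 2 (∑ y : Fin m → Fin n → Option Bool, ∑ x : Fin n → Bool,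
          becJoint ε m n x y * (G n y x : ℝ)))
      atTop (nhds (Real.logb 2 (1 + ε ^ m))) := by
  simp only [expected_guesswork_eq hε (hG _)]
  exact tendsto_one_div_mul_logb_pow_add_one_div_two
    (le_add_of_nonneg_right (pow_nonneg hε.1.le m))

/-- Corollary 1 of the paper: the expected guesswork exponent of the
centralized mechanism with `m` agents under BEC(`ε`) side information is `log₂(1 + ε^m)`. -/
theorem centralized_bec_expected_guesswork_exponent
    (m : ℕ) (hm : 1 ≤ m) (ε : ℝ) (hε : ε ∈ Set.Ioo (0 : ℝ) 1)
    (G : ∀ n, (Fin m → Fin n → Option Bool) → (Fin n → Bool) → ℕ)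
    (hG : ∀ n y, IsGuessingFunction (becCond ε m n y) (G n y)) :
    Tendsto
      (fun n : ℕ => (1 / (n : ℝ)) *
        Real.logb 2 (∑ y : Fin m → Fin n → Option Bool, ∑ x : Fin n → Bool,
          becJoint ε m n x y * (G n y x : ℝ)))
      atTop (nhds (Real.logb 2 (1 + ε ^ m))) :=
  centralized_bec_expected_guesswork_exponent_general m ε hε G hG
end

section
/- Fix δ ∈ (0,1/2) and α > 0, and set δ̃ = δ² / (1 − 2δ(1−δ)). Let X^n be uniformly distributed on {0,1}^n and let Y_(1)^n, Y_(2)^n be obtained from X^n by passing it through two independent binary symmetric channels with crossover probability δ (each coordinate of each copy is independently flipped with probability δ). Let Y' = (Y_(1)^n, Y_(2)^n) and, for each realization of Y', let G(·|Y') be a guessing function for the conditional distribution of X^n given Y'. Then lim_{n→∞} (1/n) log₂ E[G(X^n|Y')^α] = sup_{λ∈[0,1]} ( αλ + α(1−λ)·H_{1/(1+α)}(δ̃) − D(λ‖2δ(1−δ)) ), where λ represents the asymptotic fraction of positions in which Y_(1)^n and Y_(2)^n disagree. -/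
open Real Filter Finset

/-- Joint distribution of a uniform `X^n` and the outputs `Y' = (Y₍₁₎,…,Y₍ₘ₎)` of `m`
independent BSC(`δ`) channels applied to `X^n`. -/
noncomputable def bscJoint (δ : ℝ) (m n : ℕ) (x : Fin n → Bool)
    (y : Fin m → Fin n → Bool) : ℝ :=
  ((1 : ℝ) / 2) ^ n * ∏ j, ∏ i, (if y j i = x i then 1 - δ else δ)

/-- Conditional distribution of `X^n` given `Y' = y` for `m` independent BSC(`δ`) channels. -/
noncomputable def bscCond (δ : ℝ) (m n : ℕ) (y : Fin m → Fin n → Bool)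
    (x : Fin n → Bool) : ℝ :=
  bscJoint δ m n x y / ∑ x', bscJoint δ m n x' y

/-- Joint distribution of a uniform `X^n` and the output of a single BSC(`δ`). -/
noncomputable def bscJoint1 (δ : ℝ) (n : ℕ) (x y : Fin n → Bool) : ℝ :=
  ((1 : ℝ) / 2) ^ n * ∏ i, (if y i = x i then 1 - δ else δ)

/-- Conditional distribution of `X^n` given the output `y` of a single BSC(`δ`). -/
noncomputable def bscCond1 (δ : ℝ) (n : ℕ) (y x : Fin n → Bool) : ℝ :=
  bscJoint1 δ n x y / ∑ x', bscJoint1 δ n x' y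

open Topology

/-!
Arıkan's bounds sandwich the expected guesswork between `∑_y (∑_x P(x, y) ^ β) ^ (1 + α)`,
`β = 1 / (1 + α)`, and the same sum divided by `(1 + n log 2) ^ α`, a subexponential factor.
For two BSC observations this sum factorises over the letters into `M ^ n`: letters where
the observations disagree (probability `p = 2δ(1 - δ)`) contribute `2 ^ α p`, letters where
they agree contribute `(1 - p) 2 ^ (α H_β(δ̃))`, `δ̃` being the posterior probability that
both copies of the bit were flipped. So the exponent is `log₂ M`, and the Gibbs variational
formula `log₂ (u + v) = max_λ (λ log₂ u + (1 - λ) log₂ v + h(λ))`, `h` the binary entropy,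
rewrites it as the stated supremum.
-/

namespace IsGuessingFunction

variable {S : Type*} [Fintype S] {q : S → ℝ} {G : S → ℕ}

lemma image_eq (h : IsGuessingFunction q G) : univ.image G = Icc 1 (Fintype.card S) := by
  refine eq_of_subset_of_card_le (fun k hk => ?_) ?_
  · obtain ⟨x, -, rfl⟩ := mem_image.1 hk
    exact h.2.1 x
  · rw [card_image_of_injective _ h.1, card_univ, Nat.card_Icc, Nat.add_sub_cancel]

lemma one_le (h : IsGuessingFunction q G) (x : S) : 1 ≤ G x :=
  (mem_Icc.1 (h.2.1 x)).1

lemma card_filter_le (h : IsGuessingFunction q G) (x : S) : #{y | G y ≤ G x} = G x := by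
  have himage : ({y | G y ≤ G x} : Finset S).image G = Icc 1 (G x) := by
    have hx := mem_Icc.1 (h.2.1 x)
    rw [show ({y | G y ≤ G x} : Finset S).image G = (univ.image G).filter (· ≤ G x) by
      rw [filter_image], h.image_eq]
    ext k
    simp only [mem_filter, mem_Icc]
    omega
  rw [← card_image_of_injective _ h.1, himage, Nat.card_Icc, Nat.add_sub_cancel]

lemma of_div_const {c : ℝ} (hc : 0 < c) (h : IsGuessingFunction (fun x => q x / c) G) :
    IsGuessingFunction q G :=
  ⟨h.1, h.2.1, fun x y hxy => h.2.2 x y (div_lt_div_of_pos_right hxy hc)⟩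

lemma mul_le_sum (h : IsGuessingFunction q G) {φ : S → ℝ} (hφ0 : ∀ y, 0 ≤ φ y)
    (hφ : ∀ x y, q x ≤ q y → φ x ≤ φ y) (x : S) : G x * φ x ≤ ∑ y, φ y :=
  calc (G x : ℝ) * φ x = ∑ y ∈ {y | G y ≤ G x}, φ x := by
        rw [sum_const, h.card_filter_le, nsmul_eq_mul]
    _ ≤ ∑ y ∈ {y | G y ≤ G x}, φ y := sum_le_sum fun y hy =>
        hφ x y <| not_lt.1 fun hlt => (h.2.2 x y hlt).not_ge (mem_filter.1 hy).2
    _ ≤ ∑ y, φ y := sum_le_sum_of_subset_of_nonneg (filter_subset _ _) fun y _ _ => hφ0 y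

lemma sum_inv_le (h : IsGuessingFunction q G) :
    ∑ x, (G x : ℝ)⁻¹ ≤ 1 + log (Fintype.card S) := by
  calc ∑ x, (G x : ℝ)⁻¹ = ∑ k ∈ Icc 1 (Fintype.card S), (k : ℝ)⁻¹ := by
        rw [← h.image_eq, sum_image fun x _ y _ hxy => h.1 hxy]
    _ = harmonic (Fintype.card S) := by push_cast [harmonic_eq_sum_Icc]; rfl
    _ ≤ 1 + log (Fintype.card S) := harmonic_le_one_add_log _

variable (hq : ∀ x, 0 ≤ q x) {α : ℝ} (hα : 0 < α)
include hq hα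

theorem sum_mul_rpow_le (h : IsGuessingFunction q G) :
    ∑ x, q x * (G x : ℝ) ^ α ≤ (∑ x, q x ^ (1 / (1 + α))) ^ (1 + α) := by
  set β := 1 / (1 + α)
  set T := ∑ x, q x ^ β
  have hβ : β + β * α = 1 := by rw [← mul_one_add]; exact one_div_mul_cancel (by positivity)
  have hrank (x : S) : G x * q x ^ β ≤ T :=
    h.mul_le_sum (fun y => rpow_nonneg (hq y) β)
      (fun x y hxy => rpow_le_rpow (hq x) hxy (by positivity)) x
  calc ∑ x, q x * (G x : ℝ) ^ α = ∑ x, q x ^ β * (G x * q x ^ β) ^ α := by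
        refine sum_congr rfl fun x _ => ?_
        rw [mul_rpow (Nat.cast_nonneg _) (rpow_nonneg (hq x) β), ← rpow_mul (hq x),
          mul_left_comm, ← rpow_add' (hq x) (by rw [hβ]; exact one_ne_zero), hβ, rpow_one,
          mul_comm]
    _ ≤ ∑ x, q x ^ β * T ^ α := sum_le_sum fun x _ =>
        mul_le_mul_of_nonneg_left (rpow_le_rpow
          (mul_nonneg (Nat.cast_nonneg _) (rpow_nonneg (hq x) β)) (hrank x) hα.le)
          (rpow_nonneg (hq x) β)
    _ = T ^ (1 + α) := by
        rw [← sum_mul, rpow_add' (sum_nonneg fun x _ => rpow_nonneg (hq x) β) (by positivity),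
          rpow_one]

theorem rpow_le_mul_sum_mul_rpow (h : IsGuessingFunction q G) :
    (∑ x, q x ^ (1 / (1 + α))) ^ (1 + α)
      ≤ (1 + log (Fintype.card S)) ^ α * ∑ x, q x * (G x : ℝ) ^ α := by
  set β := 1 / (1 + α)
  set H := ∑ x, (G x : ℝ)⁻¹
  set E := ∑ x, q x * (G x : ℝ) ^ α
  have hG (x : S) : (0 : ℝ) < G x := Nat.cast_pos.2 (h.one_le x)
  have hH : 0 ≤ H := sum_nonneg fun x _ => (inv_pos.2 (hG x)).le
  have hE : 0 ≤ E := sum_nonneg fun x _ => mul_nonneg (hq x) (rpow_nonneg (hG x).le α)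
  have holder : ∑ x, q x ^ β ≤ H ^ (1 - (1 + α)⁻¹) * E ^ (1 + α)⁻¹ := by
    convert inner_le_weight_mul_Lp_of_nonneg univ (p := 1 + α) (by linarith)
      (fun x => (G x : ℝ)⁻¹) (fun x => q x ^ β * G x) (fun x => (inv_pos.2 (hG x)).le)
      (fun x => mul_nonneg (rpow_nonneg (hq x) β) (hG x).le) using 3 with x
    · rw [mul_left_comm, inv_mul_cancel₀ (hG x).ne', mul_one]
    · refine sum_congr rfl fun x _ => ?_
      rw [mul_rpow (rpow_nonneg (hq x) β) (hG x).le, ← rpow_mul (hq x),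
        one_div_mul_cancel (by positivity), rpow_one, rpow_add (hG x), rpow_one]
      field_simp [(hG x).ne']
  calc (∑ x, q x ^ β) ^ (1 + α) ≤ (H ^ (1 - (1 + α)⁻¹) * E ^ (1 + α)⁻¹) ^ (1 + α) :=
        rpow_le_rpow (sum_nonneg fun x _ => rpow_nonneg (hq x) β) holder (by positivity)
    _ = H ^ α * E := by
        rw [mul_rpow (rpow_nonneg hH _) (rpow_nonneg hE _), ← rpow_mul hH, ← rpow_mul hE,
          inv_mul_cancel₀ (by positivity), rpow_one]
        congr 2
        field_simp
        ring
    _ ≤ (1 + log (Fintype.card S)) ^ α * E :=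
        mul_le_mul_of_nonneg_right (rpow_le_rpow hH h.sum_inv_le hα.le) hE

end IsGuessingFunction

lemma sum_rpow_sum_prod_rpow {A B : Type*} [Fintype A] [Fintype B] {L : A → B → ℝ}
    (hL : ∀ a b, 0 ≤ L a b) (β γ : ℝ) (n : ℕ) :
    ∑ y : Fin n → B, (∑ x : Fin n → A, (∏ i, L (x i) (y i)) ^ β) ^ γ
      = (∑ b, (∑ a, L a b ^ β) ^ γ) ^ n := by
  have hfactor (y : Fin n → B) :
      ∑ x : Fin n → A, (∏ i, L (x i) (y i)) ^ β = ∏ i, ∑ a, L a (y i) ^ β := by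
    rw [Fintype.prod_sum]
    exact sum_congr rfl fun x _ => (finsetProd_rpow _ _ (fun i _ => hL _ _) β).symm
  simp_rw [hfactor, ← finsetProd_rpow _ _
    (fun i _ => sum_nonneg fun a _ => rpow_nonneg (hL a _) β) γ]
  rw [Fintype.sum_pow]

noncomputable def bscLetter (δ : ℝ) (m : ℕ) (a : Bool) (b : Fin m → Bool) : ℝ :=
  1 / 2 * ∏ j, if b j = a then 1 - δ else δ

lemma bscLetter_nonneg {δ : ℝ} (hδ0 : 0 ≤ δ) (hδ1 : δ ≤ 1) (m : ℕ) (a : Bool)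
    (b : Fin m → Bool) : 0 ≤ bscLetter δ m a b :=
  mul_nonneg (by norm_num) (prod_nonneg fun j _ => by split_ifs <;> linarith)

lemma bscJoint_eq_prod_bscLetter (δ : ℝ) (m n : ℕ) (x : Fin n → Bool)
    (y : Fin m → Fin n → Bool) :
    bscJoint δ m n x y = ∏ i, bscLetter δ m (x i) (fun j => y j i) := by
  simp only [bscJoint, bscLetter]
  rw [prod_mul_distrib, prod_const, card_univ, Fintype.card_fin, Finset.prod_comm]

lemma bscJoint_pos {δ : ℝ} (hδ0 : 0 < δ) (hδ1 : δ < 1) (m n : ℕ) (x : Fin n → Bool)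
    (y : Fin m → Fin n → Bool) : 0 < bscJoint δ m n x y :=
  mul_pos (by positivity) (prod_pos fun j _ => prod_pos fun i _ => by split_ifs <;> linarith)

lemma sum_rpow_sum_bscJoint_rpow {δ : ℝ} (hδ0 : 0 ≤ δ) (hδ1 : δ ≤ 1) (β γ : ℝ) (m n : ℕ) :
    ∑ y : Fin m → Fin n → Bool, (∑ x, bscJoint δ m n x y ^ β) ^ γ
      = (∑ b : Fin m → Bool, (∑ a, bscLetter δ m a b ^ β) ^ γ) ^ n := by
  rw [← sum_rpow_sum_prod_rpow (bscLetter_nonneg hδ0 hδ1 m),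
    ← (Equiv.piComm fun (_ : Fin m) (_ : Fin n) => Bool).sum_comp]
  simp only [bscJoint_eq_prod_bscLetter]
  rfl

lemma rpow_inv_mul_rpow {s e γ : ℝ} (hs : 0 ≤ s) (he : 0 ≤ e) (hγ : γ ≠ 0) :
    (s ^ γ⁻¹ * e) ^ γ = s * e ^ γ := by
  rw [mul_rpow (rpow_nonneg hs _) he, ← rpow_mul hs, inv_mul_cancel₀ hγ, rpow_one]

lemma mul_rpow_inv_add_mul_rpow_inv_rpow {c x y γ : ℝ} (hc : 0 ≤ c) (hx : 0 ≤ x) (hy : 0 ≤ y)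
    (hγ : γ ≠ 0) : ((c * x) ^ γ⁻¹ + (c * y) ^ γ⁻¹) ^ γ = c * (x ^ γ⁻¹ + y ^ γ⁻¹) ^ γ := by
  rw [mul_rpow hc hx, mul_rpow hc hy, ← mul_add,
    rpow_inv_mul_rpow hc (add_nonneg (rpow_nonneg hx _) (rpow_nonneg hy _)) hγ]

lemma two_rpow_mul_Hb {α t : ℝ} (hα : 0 < α) (ht0 : 0 ≤ t) (ht1 : t ≤ 1) :
    (2 : ℝ) ^ (α * Hb (1 / (1 + α)) t)
      = (t ^ (1 / (1 + α)) + (1 - t) ^ (1 / (1 + α))) ^ (1 + α) := by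
  have hpos : 0 < t ^ (1 / (1 + α)) + (1 - t) ^ (1 / (1 + α)) := by
    rcases ht0.eq_or_lt with rfl | ht
    · rw [sub_zero, one_rpow, zero_rpow (by positivity), zero_add]
      exact one_pos
    · exact add_pos_of_pos_of_nonneg (rpow_pos_of_pos ht _) (rpow_nonneg (by linarith) _)
  have hexp : α * (1 / (1 - 1 / (1 + α))) = 1 + α := by
    rw [show 1 - 1 / (1 + α) = α / (1 + α) by field_simp; ring]
    field_simp
  rw [Hb, ← mul_assoc, hexp, ← logb_rpow_eq_mul_logb_of_pos hpos,
    rpow_logb two_pos (by norm_num) (rpow_pos_of_pos hpos _)]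

lemma sum_bscLetter_two_rpow {δ α : ℝ} (hδ0 : 0 ≤ δ) (hδ1 : δ ≤ 1) (hα : 0 < α) :
    ∑ b : Fin 2 → Bool, (∑ a, bscLetter δ 2 a b ^ (1 / (1 + α))) ^ (1 + α)
      = 2 ^ α * (2 * δ * (1 - δ))
        + 2 ^ (α * Hb (1 / (1 + α)) (δ ^ 2 / (1 - 2 * δ * (1 - δ))))
          * (1 - 2 * δ * (1 - δ)) := by
  set s := 1 - 2 * δ * (1 - δ)
  have hs : 0 < s := by simp only [s]; nlinarith [sq_nonneg (2 * δ - 1)]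
  set t := δ ^ 2 / s
  have hts : δ * δ = s * t := by rw [mul_div_cancel₀ _ hs.ne', sq]
  have hts' : (1 - δ) * (1 - δ) = s * (1 - t) := by rw [mul_one_sub s t, ← hts]; ring
  have ht1 : t ≤ 1 := by rw [div_le_one hs]; nlinarith
  rw [two_rpow_mul_Hb hα (by positivity) ht1]
  set γ := 1 + α
  have hγ : γ ≠ 0 := by positivity
  have he : 0 ≤ δ * (1 - δ) := mul_nonneg hδ0 (by linarith)
  have hhalf : (0 : ℝ) ≤ 2⁻¹ := by norm_num
  have hagree : ((2⁻¹ * ((1 - δ) * (1 - δ))) ^ γ⁻¹ + (2⁻¹ * (δ * δ)) ^ γ⁻¹) ^ γ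
      = 2⁻¹ * ((t ^ γ⁻¹ + (1 - t) ^ γ⁻¹) ^ γ * s) := by
    rw [mul_rpow_inv_add_mul_rpow_inv_rpow hhalf (mul_self_nonneg _) (mul_self_nonneg _) hγ,
      hts, hts', mul_rpow_inv_add_mul_rpow_inv_rpow hs.le (by linarith) (by positivity) hγ,
      add_comm, mul_comm s]
  have hdisagree : ((2⁻¹ * (δ * (1 - δ))) ^ γ⁻¹ + (2⁻¹ * (δ * (1 - δ))) ^ γ⁻¹) ^ γ
      = 2⁻¹ * (2 ^ α * (2 * δ * (1 - δ))) := by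
    rw [mul_rpow_inv_add_mul_rpow_inv_rpow hhalf he he hγ, ← two_mul, mul_comm 2,
      rpow_inv_mul_rpow he zero_le_two hγ, rpow_add two_pos, rpow_one]
    ring
  rw [← (piFinTwoEquiv fun _ => Bool).symm.sum_comp, Fintype.sum_prod_type]
  simp only [bscLetter, Fin.prod_univ_two, Fintype.sum_bool, piFinTwoEquiv_symm_apply,
    Fin.cons_zero, Fin.cons_one, one_div, mul_ite, ite_mul, ite_pow, Bool.true_eq_false,
    Bool.false_eq_true, ↓reduceIte]
  rw [mul_comm (1 - δ) δ, add_comm ((2⁻¹ * (δ * δ)) ^ γ⁻¹), hagree, hdisagree]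
  ring

lemma mul_logb_sub_mul_logb_le {b a w : ℝ} (hb : 1 < b) (ha : 0 ≤ a) (hw : 0 < w) :
    a * logb b w - a * logb b a ≤ (w - a) / log b := by
  rcases ha.eq_or_lt with rfl | ha
  · simpa using div_nonneg hw.le (log_pos hb).le
  rw [← mul_sub, ← logb_div hw.ne' ha.ne', logb, mul_div_assoc', div_le_div_iff_of_pos_right
    (log_pos hb)]
  calc a * log (w / a) ≤ a * (w / a - 1) := mul_le_mul_of_nonneg_left
        (log_le_sub_one_of_pos (div_pos hw ha)) ha.le
    _ = w - a := by field_simp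

lemma mul_logb_div {b : ℝ} (a : ℝ) {c : ℝ} (hc : c ≠ 0) :
    a * logb b (a / c) = a * logb b a - a * logb b c := by
  rcases eq_or_ne a 0 with rfl | ha
  · simp
  · rw [logb_div ha hc, mul_sub]

lemma Dkl_eq_neg_binEnt_sub {p : ℝ} (hp0 : p ≠ 0) (hp1 : p ≠ 1) (lam : ℝ) :
    Dkl lam p = -binEnt lam - lam * logb 2 p - (1 - lam) * logb 2 (1 - p) := by
  rw [Dkl, binEnt, mul_logb_div _ hp0, mul_logb_div _ (sub_ne_zero.2 hp1.symm)]
  ring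

lemma mul_logb_add_mul_logb_add_binEnt_le {u v lam : ℝ} (hu : 0 < u) (hv : 0 < v)
    (h0 : 0 ≤ lam) (h1 : lam ≤ 1) :
    lam * logb 2 u + (1 - lam) * logb 2 v + binEnt lam ≤ logb 2 (u + v) := by
  have huv : 0 < u + v := by positivity
  have hu' := mul_logb_sub_mul_logb_le one_lt_two h0 (div_pos hu huv)
  have hv' := mul_logb_sub_mul_logb_le one_lt_two (sub_nonneg.2 h1) (div_pos hv huv)
  rw [logb_div hu.ne' huv.ne'] at hu'
  rw [logb_div hv.ne' huv.ne'] at hv'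
  have hsum : (u / (u + v) - lam) / log 2 + (v / (u + v) - (1 - lam)) / log 2 = 0 := by
    rw [← add_div, div_eq_zero_iff]
    left
    field_simp
    ring
  rw [binEnt]
  linarith

lemma mul_logb_add_mul_logb_add_binEnt_div_add {u v : ℝ} (hu : 0 < u) (hv : 0 < v) :
    u / (u + v) * logb 2 u + (1 - u / (u + v)) * logb 2 v + binEnt (u / (u + v))
      = logb 2 (u + v) := by
  have huv : 0 < u + v := by positivity
  have hv' : 1 - u / (u + v) = v / (u + v) := by field_simp; ring
  rw [binEnt, hv', logb_div hu.ne' huv.ne', logb_div hv.ne' huv.ne']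
  have hone : u / (u + v) + v / (u + v) = 1 := by field_simp
  linear_combination logb 2 (u + v) * hone

lemma iSup_mul_logb_add_mul_logb_add_binEnt {u v : ℝ} (hu : 0 < u) (hv : 0 < v) :
    ⨆ lam : Set.Icc (0 : ℝ) 1, ((lam : ℝ) * logb 2 u + (1 - lam) * logb 2 v + binEnt lam)
      = logb 2 (u + v) := by
  have hmem : u / (u + v) ∈ Set.Icc (0 : ℝ) 1 :=
    ⟨by positivity, (div_le_one (by positivity)).2 (by linarith)⟩
  have hle (lam : Set.Icc (0 : ℝ) 1) :=
    mul_logb_add_mul_logb_add_binEnt_le hu hv lam.2.1 lam.2.2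
  refine le_antisymm (ciSup_le hle) (le_ciSup_of_le ⟨logb 2 (u + v), ?_⟩ ⟨_, hmem⟩
    (mul_logb_add_mul_logb_add_binEnt_div_add hu hv).ge)
  rintro _ ⟨lam, rfl⟩
  exact hle lam

lemma iSup_mul_add_mul_sub_Dkl {p : ℝ} (hp0 : 0 < p) (hp1 : p < 1) (a c : ℝ) :
    ⨆ lam : Set.Icc (0 : ℝ) 1, (a * lam + c * (1 - lam) - Dkl lam p)
      = logb 2 (2 ^ a * p + 2 ^ c * (1 - p)) := by
  have hlogb (r : ℝ) {x : ℝ} (hx : 0 < x) : logb 2 (2 ^ r * x) = r + logb 2 x := by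
    rw [logb_mul (by positivity) hx.ne', logb_rpow two_pos (by norm_num)]
  rw [← iSup_mul_logb_add_mul_logb_add_binEnt (by positivity) (mul_pos (by positivity)
    (sub_pos.2 hp1)), hlogb a hp0, hlogb c (sub_pos.2 hp1)]
  congr 1 with lam
  rw [Dkl_eq_neg_binEnt_sub hp0.ne' hp1.ne]
  ring

lemma tendsto_log_one_add_mul_div_atTop {c : ℝ} (hc : 0 < c) :
    Tendsto (fun n : ℕ => log (1 + n * c) / n) atTop (𝓝 0) := by
  have hlin : Tendsto (fun n : ℕ => 1 + n * c) atTop atTop :=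
    tendsto_atTop_add_const_left _ _ (tendsto_natCast_atTop_atTop.atTop_mul_const hc)
  refine ((tendsto_pow_log_div_mul_add_atTop c⁻¹ (-c⁻¹) 1 (inv_ne_zero hc.ne')).comp hlin).congr
    fun n => ?_
  simp only [Function.comp_apply, pow_one]
  congr 1
  field_simp
  ring

lemma tendsto_logb_rpow_one_add_mul_div_atTop {c : ℝ} (hc : 0 < c) (b α : ℝ) :
    Tendsto (fun n : ℕ => logb b ((1 + n * c) ^ α) / n) atTop (𝓝 0) := by
  convert (tendsto_log_one_add_mul_div_atTop hc).const_mul (α / log b) using 2 with n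
  · rw [logb_rpow_eq_mul_logb_of_pos (by positivity), logb]
    ring
  · rw [mul_zero]

lemma tendsto_inv_mul_logb_of_le_pow_of_pow_le_mul {b M : ℝ} {S C : ℕ → ℝ} (hb : 1 < b)
    (hM : 0 < M) (hC : ∀ n, 0 < C n)
    (hCsub : Tendsto (fun n : ℕ => logb b (C n) / n) atTop (𝓝 0))
    (hup : ∀ n, S n ≤ M ^ n) (hlow : ∀ n, M ^ n ≤ C n * S n) :
    Tendsto (fun n : ℕ => 1 / (n : ℝ) * logb b (S n)) atTop (𝓝 (logb b M)) := by
  have hS (n : ℕ) : 0 < S n :=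
    pos_of_mul_pos_right ((pow_pos hM n).trans_le (hlow n)) (hC n).le
  have hlower : ∀ᶠ n : ℕ in atTop, logb b M - logb b (C n) / n ≤ 1 / (n : ℝ) * logb b (S n) := by
    filter_upwards [eventually_gt_atTop 0] with n hn
    rw [one_div_mul_eq_div, sub_le_iff_le_add, ← add_div, le_div_iff₀ (Nat.cast_pos.2 hn),
      mul_comm, ← logb_pow, add_comm, ← logb_mul (hC n).ne' (hS n).ne']
    exact logb_le_logb_of_le hb (pow_pos hM n) (hlow n)
  have hupper : ∀ᶠ n : ℕ in atTop, 1 / (n : ℝ) * logb b (S n) ≤ logb b M := by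
    filter_upwards [eventually_gt_atTop 0] with n hn
    rw [one_div_mul_eq_div, div_le_iff₀ (Nat.cast_pos.2 hn), mul_comm, ← logb_pow]
    exact logb_le_logb_of_le hb (hS n) (hup n)
  exact tendsto_of_tendsto_of_tendsto_of_le_of_le'
    (by simpa using tendsto_const_nhds.sub hCsub) tendsto_const_nhds hlower hupper

/-- Theorem 3 of the paper: the centralized guesswork exponent with two
agents under BSC(`δ`) side information, where `δ̃ = δ²/(1 − 2δ(1−δ))`. -/
theorem centralized_bsc_two_agents_guesswork_exponent
    (δ : ℝ) (hδ : δ ∈ Set.Ioo (0 : ℝ) (1 / 2)) (α : ℝ) (hα : 0 < α)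
    (G : ∀ n, (Fin 2 → Fin n → Bool) → (Fin n → Bool) → ℕ)
    (hG : ∀ n y, IsGuessingFunction (bscCond δ 2 n y) (G n y)) :
    Tendsto
      (fun n : ℕ => (1 / (n : ℝ)) *
        Real.logb 2 (∑ y : Fin 2 → Fin n → Bool, ∑ x : Fin n → Bool,
          bscJoint δ 2 n x y * (G n y x : ℝ) ^ α))
      atTop
      (nhds (⨆ lam : Set.Icc (0 : ℝ) 1,
        (α * (lam : ℝ) + α * (1 - (lam : ℝ)) * Hb (1 / (1 + α)) (δ ^ 2 / (1 - 2 * δ * (1 - δ)))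
          - Dkl lam (2 * δ * (1 - δ))))) := by
  obtain ⟨hδ0, hδ1⟩ := hδ
  set H := Hb (1 / (1 + α)) (δ ^ 2 / (1 - 2 * δ * (1 - δ)))
  set p := 2 * δ * (1 - δ)
  have hp0 : 0 < p := mul_pos (by positivity) (by linarith)
  have hp1 : p < 1 := by nlinarith [sq_nonneg (2 * δ - 1)]
  have hP := bscJoint_pos hδ0 (by linarith : δ < 1) 2
  have hG' (n : ℕ) (y) : IsGuessingFunction (fun x => bscJoint δ 2 n x y) (G n y) :=
    (hG n y).of_div_const (sum_pos (fun x _ => hP n x y) univ_nonempty)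
  have hsum (n : ℕ) : ∑ y : Fin 2 → Fin n → Bool,
      (∑ x, bscJoint δ 2 n x y ^ (1 / (1 + α))) ^ (1 + α)
        = (2 ^ α * p + 2 ^ (α * H) * (1 - p)) ^ n := by
    rw [sum_rpow_sum_bscJoint_rpow hδ0.le (by linarith),
      sum_bscLetter_two_rpow hδ0.le (by linarith) hα]
  have hsup : ⨆ lam : Set.Icc (0 : ℝ) 1, (α * (lam : ℝ) + α * (1 - (lam : ℝ)) * H - Dkl lam p)
      = logb 2 (2 ^ α * p + 2 ^ (α * H) * (1 - p)) := by
    rw [← iSup_mul_add_mul_sub_Dkl hp0 hp1]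
    congr 1 with lam
    ring
  rw [hsup]
  refine tendsto_inv_mul_logb_of_le_pow_of_pow_le_mul one_lt_two (by positivity)
    (C := fun n => (1 + n * log 2) ^ α) (fun n => by positivity)
    (tendsto_logb_rpow_one_add_mul_div_atTop (log_pos one_lt_two) 2 α)
    (fun n => ?_) (fun n => ?_)
  · rw [← hsum n]
    exact sum_le_sum fun y _ => (hG' n y).sum_mul_rpow_le (fun x => (hP n x y).le) hα
  · rw [← hsum n, mul_sum]
    refine sum_le_sum fun y _ => ?_
    have h := (hG' n y).rpow_le_mul_sum_mul_rpow (fun x => (hP n x y).le) hα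
    rwa [Fintype.card_fun, Fintype.card_bool, Fintype.card_fin, Nat.cast_pow, Nat.cast_ofNat,
      log_pow] at h
end
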